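/- arXiv:math/0503643 — 2 statements merged into one kernel-verified Lean document; each statement's English description precedes it below -/
import Mathlib

section
/- The matrix function algebra T⁺(C_n) is semisimple: if a = [z^{ℓ(i,j)} f_{i,j}(z^n)] ∈ T⁺(C_n) satisfies φ_λ(a) = 0 for all λ with 0 < |λ| < 1, then a = 0. -/
open Metric

/-- exponent pattern of `T⁺(C_n)`: `ℓ(i,j) = (j - i) mod n`. -/
def ellC (n : ℕ) (i j : Fin n) : ℕ := ((j : ℕ) + n - (i : ℕ)) % n

/-- `T⁺(C_n)` is semisimple: if `a = [z^{ℓ(i,j)} f_{i,j}(z^n)]`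
satisfies `φ_λ(a) = 0` for all `0 < |λ| < 1`, then `a = 0`. -/
theorem stmt10 (n : ℕ) (hn : 1 ≤ n) (f : Fin n → Fin n → ℂ → ℂ)
    (hf : ∀ i j, ContinuousOn (f i j) (closedBall (0 : ℂ) 1) ∧
      DifferentiableOn ℂ (f i j) (ball (0 : ℂ) 1))
    (hval : ∀ lam : ℂ, 0 < ‖lam‖ → ‖lam‖ < 1 →
      ∀ i j, lam ^ ellC n i j * f i j (lam ^ n) = 0) :
    ∀ i j, ∀ z ∈ closedBall (0 : ℂ) 1, z ^ ellC n i j * f i j (z ^ n) = 0 := by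
  have hn0 : n ≠ 0 := by omega
  -- the punctured ball
  set s : Set ℂ := ball (0 : ℂ) 1 ∩ ({0}ᶜ : Set ℂ) with hs
  have hssub : s ⊆ closedBall (0 : ℂ) 1 := fun x hx => ball_subset_closedBall hx.1
  have hclos : closedBall (0 : ℂ) 1 ⊆ closure s := by
    have h1 : ball (0 : ℂ) 1 ⊆ closure s :=
      (dense_compl_singleton (0 : ℂ)).open_subset_closure_inter isOpen_ball
    calc closedBall (0 : ℂ) 1 = closure (ball (0 : ℂ) 1) := (closure_ball 0 one_ne_zero).symm
      _ ⊆ closure (closure s) := closure_mono h1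
      _ = closure s := closure_closure
  have key : ∀ i j, ∀ w ∈ closedBall (0 : ℂ) 1, f i j w = 0 := by
    intro i j
    -- f i j vanishes on the punctured ball
    have h0 : ∀ w ∈ s, f i j w = 0 := by
      rintro w ⟨hwb, hwne⟩
      have hwne : w ≠ 0 := hwne
      set lam : ℂ := w ^ ((n : ℂ)⁻¹) with hlam
      have hpow : lam ^ n = w := Complex.cpow_nat_inv_pow w hn0
      have hlne : lam ≠ 0 := by
        intro h
        apply hwne
        rw [← hpow, h, zero_pow hn0]
      have hln : ‖lam‖ < 1 := by
        by_contra h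
        push_neg at h
        have h1 : (1 : ℝ) ≤ ‖lam‖ ^ n := one_le_pow₀ h
        rw [← norm_pow, hpow] at h1
        have : ‖w‖ < 1 := by simpa using hwb
        linarith
      have hval' := hval lam (norm_pos_iff.mpr hlne) hln i j
      have : f i j (lam ^ n) = 0 :=
        (mul_eq_zero.mp hval').resolve_left (pow_ne_zero _ hlne)
      rwa [hpow] at this
    intro w hw
    have hct : ContinuousWithinAt (f i j) (closedBall (0 : ℂ) 1) w := (hf i j).1 w hw
    have hct' : ContinuousWithinAt (f i j) s w := hct.mono hssub
    have hne : (nhdsWithin w s).NeBot := mem_closure_iff_nhdsWithin_neBot.mp (hclos hw)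
    have htend : Filter.Tendsto (f i j) (nhdsWithin w s) (nhds (f i j w)) := hct'
    have htend0 : Filter.Tendsto (f i j) (nhdsWithin w s) (nhds 0) := by
      apply Filter.Tendsto.congr' _ tendsto_const_nhds
      filter_upwards [self_mem_nhdsWithin] with x hx
      exact (h0 x hx).symm
    exact tendsto_nhds_unique htend htend0
  intro i j z hz
  have hzn : z ^ n ∈ closedBall (0 : ℂ) 1 := by
    simp only [mem_closedBall, dist_zero_right] at hz ⊢
    rw [norm_pow]
    exact pow_le_one₀ (norm_nonneg z) hz
  rw [key i j (z ^ n) hzn, mul_zero]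
end

section
/- For λ on the unit circle, the ideal {f ∈ A(𝔻) : f(λ) = 0} in the disk algebra has a bounded approximate identity: there is a net (f_ι) in the ideal, uniformly bounded in norm, with f_ι g → g in norm for every g in the ideal. -/
/-!
With `w(z) = 1 - conj λ · z`, which has nonnegative real part on the closed disk, vanishes only at
`λ` there and satisfies `|w(z)| = |z - λ|`, take `e_n = n w / (1 + n w)`. Then `|e_n| ≤ 1` and
`g - e_n g = g / (1 + n w)`: near `λ` this is at most `|g|`, which is small since `g(λ) = 0`;
away from `λ` it is at most `sup |g| / (n δ)`.
-/

open Metric Filter Topology ComplexConjugate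

namespace Complex

lemma norm_le_norm_one_add_of_re_nonneg {u : ℂ} (hu : 0 ≤ u.re) : ‖u‖ ≤ ‖1 + u‖ := by
  rw [← sq_le_sq₀ (norm_nonneg _) (norm_nonneg _), Complex.sq_norm, Complex.sq_norm, normSq_apply, normSq_apply]
  simp only [add_re, add_im, one_re, one_im, zero_add]
  nlinarith

lemma one_le_norm_one_add_of_re_nonneg {u : ℂ} (hu : 0 ≤ u.re) : 1 ≤ ‖1 + u‖ :=
  calc (1 : ℝ) ≤ (1 + u).re := by simpa using hu
    _ ≤ ‖1 + u‖ := re_le_norm _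

lemma one_add_ne_zero_of_re_nonneg {u : ℂ} (hu : 0 ≤ u.re) : 1 + u ≠ 0 :=
  norm_pos_iff.1 (one_pos.trans_le (one_le_norm_one_add_of_re_nonneg hu))

lemma norm_div_one_add_le_one_of_re_nonneg {u : ℂ} (hu : 0 ≤ u.re) : ‖u / (1 + u)‖ ≤ 1 := by
  rw [norm_div]
  exact div_le_one_of_le₀ (norm_le_norm_one_add_of_re_nonneg hu) (norm_nonneg _)

lemma re_natCast_mul_nonneg {u : ℂ} (hu : 0 ≤ u.re) (n : ℕ) : 0 ≤ ((n : ℂ) * u).re := by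
  simpa using mul_nonneg n.cast_nonneg hu

lemma re_one_sub_conj_mul_nonneg {a z : ℂ} (ha : ‖a‖ ≤ 1) (hz : ‖z‖ ≤ 1) :
    0 ≤ (1 - conj a * z).re := by
  have : (conj a * z).re ≤ 1 :=
    calc (conj a * z).re ≤ ‖conj a * z‖ := re_le_norm _
      _ ≤ 1 := by rw [norm_mul, norm_conj]; exact mul_le_one₀ ha (norm_nonneg _) hz
  simpa using this

lemma one_sub_conj_mul_eq_conj_mul_sub {a : ℂ} (ha : ‖a‖ = 1) (z : ℂ) :
    1 - conj a * z = conj a * (a - z) := by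
  rw [mul_sub, conj_mul', ha]
  simp

lemma norm_one_sub_conj_mul {a : ℂ} (ha : ‖a‖ = 1) (z : ℂ) : ‖1 - conj a * z‖ = dist z a := by
  rw [one_sub_conj_mul_eq_conj_mul_sub ha, norm_mul, norm_conj, ha, one_mul, dist_comm,
    dist_eq_norm]

end Complex

open Complex

theorem tendstoUniformlyOn_natCast_mul_div_one_add_mul {α : Type*} {S : Set α} {w g : α → ℂ}
    (hw : ∀ z ∈ S, 0 ≤ (w z).re) (hg : ∃ M, ∀ z ∈ S, ‖g z‖ ≤ M)
    (hgw : ∀ ε > 0, ∃ δ > 0, ∀ z ∈ S, ‖w z‖ < δ → ‖g z‖ < ε) :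
    TendstoUniformlyOn (fun (n : ℕ) z => n * w z / (1 + n * w z) * g z) g atTop S := by
  rw [Metric.tendstoUniformlyOn_iff]
  intro ε hε
  obtain ⟨δ, hδ, hsmall⟩ := hgw ε hε
  obtain ⟨M, hM⟩ := hg
  have hlim : Tendsto (fun n : ℕ => M / δ / n) atTop (𝓝 0) :=
    tendsto_const_div_atTop_nhds_zero_nat _
  filter_upwards [hlim.eventually (gt_mem_nhds hε), eventually_gt_atTop 0] with n hn hn0 z hz
  have hnw := re_natCast_mul_nonneg (hw z hz) n
  have hD := one_add_ne_zero_of_re_nonneg hnw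
  have hsub : g z - n * w z / (1 + n * w z) * g z = g z / (1 + n * w z) := by
    field_simp
    ring
  rw [dist_eq_norm, hsub, norm_div]
  rcases lt_or_ge ‖w z‖ δ with hnear | hfar
  · exact (div_le_self (norm_nonneg _) (one_le_norm_one_add_of_re_nonneg hnw)).trans_lt
      (hsmall z hz hnear)
  · have hlow : n * δ ≤ ‖1 + n * w z‖ :=
      calc (n : ℝ) * δ ≤ ‖(n : ℂ) * w z‖ := by
            rw [norm_mul, norm_natCast]; gcongr
        _ ≤ ‖1 + n * w z‖ := norm_le_norm_one_add_of_re_nonneg hnw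
    calc ‖g z‖ / ‖1 + n * w z‖ ≤ M / (n * δ) :=
          div_le_div₀ ((norm_nonneg _).trans (hM z hz)) (hM z hz) (by positivity) hlow
      _ = M / δ / n := by rw [div_div, mul_comm]
      _ < ε := hn

/-- for `|λ| = 1`, the ideal `{f ∈ A(𝔻) : f(λ) = 0}` of the disk
algebra has a bounded approximate identity. -/
theorem stmt13 (lam : ℂ) (hlam : ‖lam‖ = 1) :
    ∃ (ι : Type) (l : Filter ι) (e : ι → ℂ → ℂ), l.NeBot ∧
      (∀ i, ContinuousOn (e i) (closedBall (0 : ℂ) 1) ∧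
        DifferentiableOn ℂ (e i) (ball (0 : ℂ) 1) ∧ e i lam = 0) ∧
      (∃ C : ℝ, ∀ i, ∀ z ∈ closedBall (0 : ℂ) 1, ‖e i z‖ ≤ C) ∧
      (∀ g : ℂ → ℂ, ContinuousOn g (closedBall (0 : ℂ) 1) →
        DifferentiableOn ℂ g (ball (0 : ℂ) 1) → g lam = 0 →
        TendstoUniformlyOn (fun i z => e i z * g z) g l (closedBall (0 : ℂ) 1)) := by
  set w : ℂ → ℂ := fun z => 1 - conj lam * z
  have hw : ∀ z ∈ closedBall (0 : ℂ) 1, 0 ≤ (w z).re := fun z hz =>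
    re_one_sub_conj_mul_nonneg hlam.le (mem_closedBall_zero_iff.1 hz)
  have hD : ∀ n : ℕ, ∀ z ∈ closedBall (0 : ℂ) 1, 1 + n * w z ≠ 0 := fun n z hz =>
    one_add_ne_zero_of_re_nonneg (re_natCast_mul_nonneg (hw z hz) n)
  refine ⟨ℕ, atTop, fun n z => n * w z / (1 + n * w z), atTop_neBot, fun n => ⟨?_, ?_, ?_⟩,
    ⟨1, fun n z hz => norm_div_one_add_le_one_of_re_nonneg (re_natCast_mul_nonneg (hw z hz) n)⟩,
    fun g hg _ hg0 => ?_⟩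
  · exact ContinuousOn.div (by fun_prop) (by fun_prop) (hD n)
  · exact DifferentiableOn.div (by fun_prop) (by fun_prop)
      fun z hz => hD n z (ball_subset_closedBall hz)
  · simp [w, one_sub_conj_mul_eq_conj_mul_sub hlam]
  · refine tendstoUniformlyOn_natCast_mul_div_one_add_mul hw
      ((isCompact_closedBall 0 1).exists_bound_of_continuousOn hg) fun ε hε => ?_
    obtain ⟨δ, hδ, hnear⟩ :=
      Metric.continuousWithinAt_iff.1 (hg lam (by simp [hlam])) ε hε
    refine ⟨δ, hδ, fun z hz hwz => ?_⟩
    simpa [hg0] using hnear hz (by rwa [← norm_one_sub_conj_mul hlam])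
end
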